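/- Every strict constant game is static: if A is a constant game such that for every legal position Φ of A, at most one of the players has a legal move in Φ (i.e., {α : ⟨Φ, ⊤α⟩ legal} = ∅ or {α : ⟨Φ, ⊥α⟩ legal} = ∅), then for any player p and runs Γ, Δ with Δ a p-delay of Γ, Wn_A(Γ) = p implies Wn_A(Δ) = p. -/

import Mathlib

/-- A run: a finite sequence of labmoves; a labmove is a pair (player, move),
player `true` = ⊤ (machine), `false` = ⊥ (environment). -/
abbrev Run (M : Type*) := List (Bool × M)

/-- Indices (0-based positions) of the `q`-labeled moves of a run. -/
def labelIndices {M : Type*} (Γ : Run M) (q : Bool) : List ℕ :=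
  (Γ.zipIdx.map Prod.swap).filterMap fun x => if x.2.1 = q then some x.1 else none

/-- In `Γ`, the `k`-th `(¬p)`-labeled move occurs strictly earlier (to the
left) than the `n`-th `p`-labeled move (`k`, `n` are 0-based here). -/
def kthPrecedes {M : Type*} (Γ : Run M) (p : Bool) (k n : ℕ) : Prop :=
  ∃ i j, (labelIndices Γ (!p))[k]? = some i ∧ (labelIndices Γ p)[n]? = some j ∧ i < j

/-- `IsDelay p Γ Δ` says that `Δ` is a `p`-delay of `Γ`: (1) same subsequence
of `p`-labeled moves and same subsequence of `(¬p)`-labeled moves; (2) whenever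
the `k`-th `(¬p)`-labeled move precedes the `n`-th `p`-labeled move in `Γ`, the
same holds in `Δ`. -/
def IsDelay {M : Type*} (p : Bool) (Γ Δ : Run M) : Prop :=
  Δ.filter (fun x => x.1 == p) = Γ.filter (fun x => x.1 == p) ∧
  Δ.filter (fun x => x.1 == !p) = Γ.filter (fun x => x.1 == !p) ∧
  ∀ k n, kthPrecedes Γ p k n → kthPrecedes Δ p k n

/-- A constant game: a pair (Lr, Wn) of a set of (legal) runs and a function
assigning to each run a winner (`true` = ⊤, `false` = ⊥). -/
structure ConstGame (M : Type*) where
  Lr : Set (Run M)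
  Wn : Run M → Bool

/-- A constant game is static iff for every player `p` and all runs Γ, Δ such
that Δ is a `p`-delay of Γ: if Γ is won by `p`, then so is Δ. -/
def ConstGame.Static {M : Type*} (A : ConstGame M) : Prop :=
  ∀ (p : Bool) (Γ Δ : Run M), IsDelay p Γ Δ → A.Wn Γ = p → A.Wn Δ = p

/-- `Γ` is a `p`-illegal run of `A`: the last move of the shortest illegal
initial segment of `Γ` is `p`-labeled. -/
def PIllegal {M : Type*} (A : ConstGame M) (p : Bool) (Γ : Run M) : Prop :=
  ∃ (Φ : Run M) (m : M),
    Φ ++ [(p, m)] <+: Γ ∧ Φ ∈ A.Lr ∧ Φ ++ [(p, m)] ∉ A.Lr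

/-!
After a common prefix, the next move of a `p`-delay Δ of Γ is the next move of Γ, except that Δ
may play a `¬p`-move where Γ plays a `p`-move: a delay only postpones `p`-moves. In a strict game
those two moves are not both legal, and a run won by `p` has no illegal `p`-move, so every legal
prefix of Δ is a prefix of Γ. Hence either Δ = Γ, or the first illegal move of Δ is a `¬p`-move
and `p` wins Δ.
-/

theorem List.IsPrefix.exists_snoc_prefix {α : Type*} {l₁ l₂ : List α} (h : l₁ <+: l₂)
    (hlt : l₁.length < l₂.length) : ∃ a, l₁ ++ [a] <+: l₂ := by
  obtain ⟨_ | ⟨a, t⟩, rfl⟩ := h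
  · simp at hlt
  · exact ⟨a, t, by simp⟩

section

variable {M : Type*}

theorem labelIndices_append (Φ Ψ : Run M) (q : Bool) :
    labelIndices (Φ ++ Ψ) q = labelIndices Φ q ++ (labelIndices Ψ q).map (· + Φ.length) := by
  rw [labelIndices, labelIndices, labelIndices, List.zipIdx_append, List.map_append,
    List.filterMap_append, List.zipIdx_eq_map_add (l := Ψ), List.map_map]
  simp only [List.filterMap_map, List.map_filterMap]
  congr 1
  refine List.filterMap_congr fun x _ => ?_
  by_cases h : x.1.1 = q <;> simp [h, Nat.add_comm]

theorem labelIndices_singleton (x : Bool × M) (q : Bool) :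
    labelIndices [x] q = if x.1 = q then [0] else [] := by
  by_cases h : x.1 = q <;> simp [labelIndices, h]

theorem length_labelIndices (Γ : Run M) (q : Bool) :
    (labelIndices Γ q).length = (Γ.filter (·.1 == q)).length := by
  induction Γ using List.reverseRecOn with
  | nil => rfl
  | append_singleton Γ x ih =>
    rw [labelIndices_append, labelIndices_singleton]
    split_ifs with h <;> simp [h, ih]

theorem labelIndices_getElem?_of_label_eq (Φ t : Run M) (q : Bool) (m : M) :
    (labelIndices (Φ ++ (q, m) :: t) q)[(Φ.filter (·.1 == q)).length]? = some Φ.length := by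
  rw [labelIndices_append, List.getElem?_append_right (length_labelIndices Φ q).le,
    length_labelIndices, Nat.sub_self, ← List.singleton_append, labelIndices_append,
    labelIndices_singleton]
  simp

theorem length_lt_of_labelIndices_getElem? {Φ t : Run M} {x : Bool × M} {q : Bool} {i : ℕ}
    (hx : x.1 ≠ q) (h : (labelIndices (Φ ++ x :: t) q)[(Φ.filter (·.1 == q)).length]? = some i) :
    Φ.length < i := by
  rw [labelIndices_append, List.getElem?_append_right (length_labelIndices Φ q).le,
    length_labelIndices, Nat.sub_self, ← List.singleton_append, labelIndices_append,
    labelIndices_singleton, if_neg hx] at h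
  simp only [List.nil_append, List.length_singleton, List.getElem?_map,
    Option.map_eq_some_iff] at h
  omega

namespace IsDelay

variable {p q : Bool} {Γ Δ Φ : Run M} {m m' : M}

theorem filter_eq (hd : IsDelay p Γ Δ) (q : Bool) :
    Δ.filter (·.1 == q) = Γ.filter (·.1 == q) := by
  obtain ⟨h₁, h₂, -⟩ := hd
  cases p <;> cases q <;> simp_all

theorem length_eq (hd : IsDelay p Γ Δ) : Δ.length = Γ.length := by
  have hsplit (Ψ : Run M) :
      Ψ.length = (Ψ.filter (·.1 == p)).length + (Ψ.filter (·.1 == !p)).length := by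
    have hnot (a : Bool) : (!(a == p)) = (a == !p) := by cases a <;> cases p <;> rfl
    simpa only [hnot] using List.length_eq_length_filter_add (l := Ψ) (·.1 == p)
  rw [hsplit Δ, hsplit Γ, hd.filter_eq, hd.filter_eq]

theorem eq_of_snoc_prefix (hd : IsDelay p Γ Δ) (hΔ : Φ ++ [(q, m)] <+: Δ)
    (hΓ : Φ ++ [(q, m')] <+: Γ) : m' = m := by
  have hΔq := hΔ.filter (·.1 == q)
  have hΓq := hΓ.filter (·.1 == q)
  rw [hd.filter_eq] at hΔq
  simp only [List.filter_append, List.filter_singleton, beq_self_eq_true, cond_true] at hΔq hΓq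
  simpa using (List.prefix_of_prefix_length_le hΓq hΔq (by simp)).eq_of_length (by simp)

theorem not_snoc_prefix_of_snoc_prefix (hd : IsDelay p Γ Δ) (hΔ : Φ ++ [(p, m)] <+: Δ) :
    ¬ Φ ++ [(!p, m')] <+: Γ := by
  rintro ⟨tΓ, hΓ⟩
  obtain ⟨tΔ, hΔ'⟩ := hΔ
  simp only [List.append_assoc, List.singleton_append] at hΓ hΔ'
  subst hΓ hΔ'
  -- Γ's `k`-th `¬p`-move precedes its `n`-th `p`-move, whereas Δ's `n`-th `p`-move comes first.
  set k := (Φ.filter (·.1 == !p)).length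
  set n := (Φ.filter (·.1 == p)).length
  have hn : n < (labelIndices (Φ ++ (!p, m') :: tΓ) p).length := by
    rw [length_labelIndices, ← hd.filter_eq]
    simp [n]
  obtain ⟨i, j, hi, hj, hij⟩ := hd.2.2 k n
    ⟨Φ.length, _, labelIndices_getElem?_of_label_eq Φ tΓ (!p) m', List.getElem?_eq_getElem hn,
      length_lt_of_labelIndices_getElem? (by simp) (List.getElem?_eq_getElem hn)⟩
  have hj' : j = Φ.length :=
    Option.some_inj.1 (hj.symm.trans (labelIndices_getElem?_of_label_eq Φ tΔ p m))
  have hi' : Φ.length < i := length_lt_of_labelIndices_getElem? (by simp) hi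
  omega

theorem snoc_prefix_or (hd : IsDelay p Γ Δ) (hΦ : Φ <+: Γ) (hΔ : Φ ++ [(q, m)] <+: Δ) :
    Φ ++ [(q, m)] <+: Γ ∨ q = !p ∧ ∃ m', Φ ++ [(p, m')] <+: Γ := by
  obtain ⟨⟨q', m'⟩, hΓ⟩ := hΦ.exists_snoc_prefix <| by
    simpa [hd.length_eq] using hΔ.length_le
  by_cases hq : q' = q
  · subst hq
    left
    rwa [← hd.eq_of_snoc_prefix hΔ hΓ]
  · obtain rfl : q' = !q := Bool.eq_not_of_ne hq
    by_cases hqp : q = p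
    · subst hqp
      exact absurd hΓ (hd.not_snoc_prefix_of_snoc_prefix hΔ)
    · obtain rfl : q = !p := Bool.eq_not_of_ne hqp
      exact Or.inr ⟨rfl, m', by simpa using hΓ⟩

end IsDelay

namespace ConstGame

def IsStrict (A : ConstGame M) : Prop :=
  ∀ Φ ∈ A.Lr, (∀ m : M, Φ ++ [(true, m)] ∉ A.Lr) ∨ (∀ m : M, Φ ++ [(false, m)] ∉ A.Lr)

variable {A : ConstGame M}

theorem IsStrict.not_mem_snoc_not (hA : A.IsStrict) {Φ : Run M} (hΦ : Φ ∈ A.Lr) {q : Bool}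
    {m m' : M} (h : Φ ++ [(q, m)] ∈ A.Lr) : Φ ++ [(!q, m')] ∉ A.Lr := by
  rcases hA Φ hΦ with h' | h' <;> cases q <;> simp_all

theorem exists_pIllegal_of_not_mem (hnil : [] ∈ A.Lr) {Δ : Run M} (hΔ : Δ ∉ A.Lr) :
    ∃ q, PIllegal A q Δ := by
  induction Δ using List.reverseRecOn with
  | nil => exact absurd hnil hΔ
  | append_singleton Φ x ih =>
    by_cases hΦ : Φ ∈ A.Lr
    · exact ⟨x.1, Φ, x.2, List.prefix_rfl, hΦ, hΔ⟩
    · obtain ⟨q, Ψ, m, hΨ, hlegal, hillegal⟩ := ih hΦ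
      exact ⟨q, Ψ, m, hΨ.trans (List.prefix_append _ _), hlegal, hillegal⟩

variable {p : Bool} {Γ Δ : Run M}

theorem IsStrict.prefix_of_delay (hA : A.IsStrict)
    (hclosed : ∀ Φ Ψ : Run M, Φ <+: Ψ → Ψ ∈ A.Lr → Φ ∈ A.Lr) (hd : IsDelay p Γ Δ)
    (hΓ : ¬ PIllegal A p Γ) {Ψ : Run M} (hΨΔ : Ψ <+: Δ) (hΨ : Ψ ∈ A.Lr) : Ψ <+: Γ := by
  induction Ψ using List.reverseRecOn with
  | nil => exact List.nil_prefix
  | append_singleton Φ x ih =>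
    obtain ⟨q, m⟩ := x
    have hΦ : Φ ∈ A.Lr := hclosed _ _ (List.prefix_append _ _) hΨ
    rcases hd.snoc_prefix_or (ih ((List.prefix_append _ _).trans hΨΔ) hΦ) hΨΔ
      with h | ⟨rfl, m', hΓ'⟩
    · exact h
    · exact absurd ⟨Φ, m', hΓ', hΦ, by simpa using hA.not_mem_snoc_not hΦ hΨ⟩ hΓ

theorem IsStrict.not_pIllegal_of_delay (hA : A.IsStrict)
    (hclosed : ∀ Φ Ψ : Run M, Φ <+: Ψ → Ψ ∈ A.Lr → Φ ∈ A.Lr) (hd : IsDelay p Γ Δ)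
    (hΓ : ¬ PIllegal A p Γ) : ¬ PIllegal A p Δ := by
  rintro ⟨Φ, m, hΔ, hΦ, hillegal⟩
  have hΦΓ := hA.prefix_of_delay hclosed hd hΓ ((List.prefix_append _ _).trans hΔ) hΦ
  rcases hd.snoc_prefix_or hΦΓ hΔ with h | ⟨hp, -⟩
  · exact hΓ ⟨Φ, m, h, hΦ, hillegal⟩
  · simp at hp

end ConstGame

end

/-- Every strict constant game is static.  Hypotheses: A is a constant game
(a run is legal iff all its nonempty initial segments are legal, and a
`p`-illegal run is not won by `p`), and A is strict (in every legal position at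
most one of the players has legal moves). -/
theorem strict_static {M : Type*} (A : ConstGame M)
    (hcl : ∀ Γ : Run M, Γ ∈ A.Lr ↔ ∀ Φ : Run M, Φ ≠ [] → Φ <+: Γ → Φ ∈ A.Lr)
    (hil : ∀ (p : Bool) (Γ : Run M), PIllegal A p Γ → A.Wn Γ ≠ p)
    (hstrict : ∀ Φ ∈ A.Lr,
      (∀ m : M, Φ ++ [(true, m)] ∉ A.Lr) ∨ (∀ m : M, Φ ++ [(false, m)] ∉ A.Lr)) :
    A.Static := by
  have hA : A.IsStrict := hstrict
  have hnil : [] ∈ A.Lr := (hcl []).2 fun Φ hne h => absurd (List.prefix_nil.1 h) hne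
  have hclosed (Φ Ψ : Run M) (h : Φ <+: Ψ) (hΨ : Ψ ∈ A.Lr) : Φ ∈ A.Lr :=
    (hcl Φ).2 fun Φ' hne h' => (hcl Ψ).1 hΨ Φ' hne (h'.trans h)
  intro p Γ Δ hd hW
  have hΓ : ¬ PIllegal A p Γ := fun h => hil p Γ h hW
  by_cases hΔ : Δ ∈ A.Lr
  · rwa [(hA.prefix_of_delay hclosed hd hΓ List.prefix_rfl hΔ).eq_of_length hd.length_eq]
  · obtain ⟨q, hq⟩ := ConstGame.exists_pIllegal_of_not_mem hnil hΔ
    obtain rfl : q = !p := Bool.eq_not_of_ne fun h =>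
      hA.not_pIllegal_of_delay hclosed hd hΓ (h ▸ hq)
    simpa using Bool.eq_not_of_ne (hil _ _ hq)
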